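/- For any graph G, the intersection of all efficient zero forcing sets of G equals the intersection of Term(F) over all efficient sets of forces F of minimum zero forcing sets of G. -/

import Mathlib

open SimpleGraph

variable {V : Type*}

/-- One simultaneous round of the color change rule: all currently forceable
vertices become black. -/
def forceStep (G : SimpleGraph V) (S : Set V) : Set V :=
  S ∪ {w | ∃ v ∈ S, G.Adj v w ∧ ∀ u, G.Adj v u → u ∉ S → u = w}

/-- The (cumulative) set of black vertices after `t` simultaneous rounds,
starting from `B`; so `B^{(t)} = propSet G B t \ propSet G B (t-1)`. -/
def propSet (G : SimpleGraph V) (B : Set V) : ℕ → Set V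
  | 0 => B
  | t + 1 => forceStep G (propSet G B t)

/-- `B` is a zero forcing set of `G`. -/
def IsZFSet (G : SimpleGraph V) (B : Set V) : Prop := ∃ t, propSet G B t = Set.univ

/-- The zero forcing number `Z(G)`. -/
noncomputable def zfNum (G : SimpleGraph V) : ℕ :=
  sInf {n | ∃ B : Set V, IsZFSet G B ∧ B.ncard = n}

/-- `B` is a minimum zero forcing set of `G`. -/
def IsMinZFSet (G : SimpleGraph V) (B : Set V) : Prop := IsZFSet G B ∧ B.ncard = zfNum G

/-- The propagation time `pt(G,B)` of a zero forcing set `B`. -/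
noncomputable def ptSet (G : SimpleGraph V) (B : Set V) : ℕ :=
  sInf {t | propSet G B t = Set.univ}

/-- The minimum propagation time `pt(G)`. -/
noncomputable def ptMin (G : SimpleGraph V) : ℕ :=
  sInf (ptSet G '' {B | IsMinZFSet G B})

/-- The maximum propagation time `PT(G)`. -/
noncomputable def ptMax (G : SimpleGraph V) : ℕ :=
  sSup (ptSet G '' {B | IsMinZFSet G B})

/-- `IsChronList G S L` : starting from black set `S`, the list `L` is a valid
chronological list of forces, performed one at a time, ending with all
vertices black. -/
def IsChronList (G : SimpleGraph V) : Set V → List (V × V) → Prop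
  | S, [] => S = Set.univ
  | S, (v, w) :: L =>
      v ∈ S ∧ w ∉ S ∧ G.Adj v w ∧ (∀ u, G.Adj v u → u ∉ S → u = w) ∧
        IsChronList G (insert w S) L

/-- `F` is a set of forces of `B`: the unordered set of forces of some
chronological list of forces of `B`. -/
def IsForceSet (G : SimpleGraph V) (B : Set V) (F : Set (V × V)) : Prop :=
  ∃ L : List (V × V), IsChronList G B L ∧ {p | p ∈ L} = F

/-- The terminus of a set of forces: the vertices performing no force. -/
def termSet (F : Set (V × V)) : Set V := {v | ∀ w, (v, w) ∉ F}

/-- The reverse set of forces. -/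
def revSet (F : Set (V × V)) : Set (V × V) := (fun p : V × V => (p.2, p.1)) '' F

/-- The (cumulative) set of black vertices after `t` rounds when propagating
using only the forces in `F`, starting from `B`;
so `F^{(t)} = fpropSet G B F t \ fpropSet G B F (t-1)`. -/
def fpropSet (G : SimpleGraph V) (B : Set V) (F : Set (V × V)) : ℕ → Set V
  | 0 => B
  | t + 1 => fpropSet G B F t ∪
      {w | ∃ v, (v, w) ∈ F ∧ v ∈ fpropSet G B F t ∧ w ∉ fpropSet G B F t ∧
        ∀ u, G.Adj v u → u ∉ fpropSet G B F t → u = w}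

/-- The propagation time `pt(G,F)` of a set of forces `F` of `B`. -/
noncomputable def ptForces (G : SimpleGraph V) (B : Set V) (F : Set (V × V)) : ℕ :=
  sInf {t | fpropSet G B F t = Set.univ}

/-- `B` is an efficient zero forcing set of `G`. -/
def IsEffZFSet (G : SimpleGraph V) (B : Set V) : Prop :=
  IsMinZFSet G B ∧ ptSet G B = ptMin G

/-- `F` is an efficient set of forces of the minimum zero forcing set `B`. -/
def IsEffForces (G : SimpleGraph V) (B : Set V) (F : Set (V × V)) : Prop :=
  IsMinZFSet G B ∧ IsForceSet G B F ∧ ptForces G B F = ptMin G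

/-!
If `F` is a set of forces of `B`, reading a chronological list of `F` backwards shows that the
reversed forces form a set of forces of `Term(F)`; both lists have `|V| - |B|` forces, so
`|Term(F)| = |B|`. The reversal is also no slower: a vertex that forces in round `r` of `F` is
black after `pt(G, F) - r + 1` rounds of the reversal. Hence `Term(F)` is an efficient zero forcing
set whenever `F` is efficient, giving `⊆`. Conversely, performing the rounds of simultaneous
forcing of an efficient zero forcing set `B` one force at a time gives an efficient set of forces
`F` of `B`, and then `revSet F` is efficient with `Term(revSet F) = B`, giving `⊇`.
-/

section

variable {G : SimpleGraph V} {B S S' T : Set V} {F : Set (V × V)} {L : List (V × V)} {v w : V}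

def IsForce (G : SimpleGraph V) (S : Set V) (v w : V) : Prop :=
  v ∈ S ∧ w ∉ S ∧ G.Adj v w ∧ ∀ u, G.Adj v u → u ∉ S → u = w

theorem IsForce.mono (h : IsForce G S v w) (hS : S ⊆ S') (hw : w ∉ S') : IsForce G S' v w :=
  ⟨hS h.1, hw, h.2.2.1, fun u hu hu' => h.2.2.2 u hu fun huS => hu' (hS huS)⟩

theorem exists_isForce_of_mem_forceStep (hw : w ∈ forceStep G S) (hwS : w ∉ S) :
    ∃ v, IsForce G S v w := by
  obtain hw | ⟨v, hv, hvw, hcond⟩ := hw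
  · exact absurd hw hwS
  · exact ⟨v, hv, hwS, hvw, hcond⟩

theorem fpropSet_mono : Monotone (fpropSet G B F) :=
  monotone_nat_of_le_succ fun _ => Set.subset_union_left

theorem fpropSet_mono_forces {F' : Set (V × V)} (hF : F ⊆ F') :
    ∀ t, fpropSet G B F t ⊆ fpropSet G B F' t
  | 0 => subset_rfl
  | t + 1 => by
    have ih := fpropSet_mono_forces hF t
    rintro w (hw | ⟨v, hvw, hv, hw, hcond⟩)
    · exact Or.inl (ih hw)
    · by_cases hw' : w ∈ fpropSet G B F' t
      · exact Or.inl hw'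
      · exact Or.inr ⟨v, hF hvw, ih hv, hw', fun u hu hu' => hcond u hu fun h => hu' (ih h)⟩

theorem mem_fpropSet_succ_of_isForce {t : ℕ} (hvw : (v, w) ∈ F) (h : IsForce G S v w)
    (hS : S ⊆ fpropSet G B F t) : w ∈ fpropSet G B F (t + 1) := by
  by_cases hw : w ∈ fpropSet G B F t
  · exact Or.inl hw
  · obtain ⟨hv, -, -, hcond⟩ := h.mono hS hw
    exact Or.inr ⟨v, hvw, hv, hw, hcond⟩

theorem fpropSet_subset_propSet (hadj : ∀ q ∈ F, G.Adj q.1 q.2) :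
    ∀ t, fpropSet G B F t ⊆ propSet G B t
  | 0 => subset_rfl
  | t + 1 => by
    have ih := fpropSet_subset_propSet hadj t
    rintro w (hw | ⟨v, hvw, hv, -, hcond⟩)
    · exact Or.inl (ih hw)
    · exact Or.inr ⟨v, ih hv, hadj _ hvw, fun u hu hu' => hcond u hu fun h => hu' (ih h)⟩

theorem exists_lt_of_mem_fpropSet (hinj : Set.InjOn Prod.snd F) (hvw : (v, w) ∈ F)
    (hwB : w ∉ B) : ∀ {r : ℕ}, w ∈ fpropSet G B F r → ∃ s < r, v ∈ fpropSet G B F s ∧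
      w ∉ fpropSet G B F s ∧ ∀ u, G.Adj v u → u ∉ fpropSet G B F s → u = w
  | 0, hw => absurd hw hwB
  | r + 1, hw => by
    by_cases hwr : w ∈ fpropSet G B F r
    · obtain ⟨s, hs, hrest⟩ := exists_lt_of_mem_fpropSet hinj hvw hwB hwr
      exact ⟨s, hs.trans r.lt_succ_self, hrest⟩
    · obtain hw | ⟨v', hv'w, hrest⟩ := hw
      · exact absurd hw hwr
      · obtain rfl : v' = v := congrArg Prod.fst (hinj hv'w hvw rfl)
        exact ⟨r, r.lt_succ_self, hrest⟩

def IsChronListTo (G : SimpleGraph V) : Set V → List (V × V) → Set V → Prop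
  | S, [], T => S = T
  | S, (v, w) :: L, T => IsForce G S v w ∧ IsChronListTo G (insert w S) L T

theorem isChronList_iff_isChronListTo :
    ∀ {S : Set V} {L : List (V × V)}, IsChronList G S L ↔ IsChronListTo G S L Set.univ
  | _, [] => Iff.rfl
  | _, (_, _) :: _ => by
    rw [IsChronList, IsChronListTo, IsForce, isChronList_iff_isChronListTo, and_assoc,
      and_assoc, and_assoc]

namespace IsChronListTo

theorem append {U : Set V} :
    ∀ {S : Set V} {L₁ L₂ : List (V × V)}, IsChronListTo G S L₁ T →
      IsChronListTo G T L₂ U → IsChronListTo G S (L₁ ++ L₂) U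
  | _, [], _, rfl, h₂ => h₂
  | _, (_, _) :: _, _, ⟨hvw, h₁⟩, h₂ => ⟨hvw, append h₁ h₂⟩

theorem snd_notMem : ∀ {S : Set V} {L : List (V × V)}, IsChronListTo G S L T →
    ∀ q ∈ L, q.2 ∉ S
  | _, [], _ => by simp
  | _, (_, _) :: _, ⟨hvw, h⟩ => by
    rintro q (_ | ⟨_, hq⟩)
    · exact hvw.2.1
    · exact fun hqS => h.snd_notMem q hq (Set.mem_insert_of_mem _ hqS)

theorem adj : ∀ {S : Set V} {L : List (V × V)}, IsChronListTo G S L T →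
    ∀ q ∈ L, G.Adj q.1 q.2
  | _, [], _ => by simp
  | _, (_, _) :: _, ⟨hvw, h⟩ => by
    rintro q (_ | ⟨_, hq⟩)
    · exact hvw.2.2.1
    · exact h.adj q hq

theorem nodup_map_snd : ∀ {S : Set V} {L : List (V × V)}, IsChronListTo G S L T →
    (L.map Prod.snd).Nodup
  | _, [], _ => List.nodup_nil
  | _, (_, w) :: _, ⟨_, h⟩ => List.nodup_cons.mpr
    ⟨fun hw => by
      obtain ⟨q, hq, rfl⟩ := List.mem_map.mp hw
      exact h.snd_notMem q hq (Set.mem_insert _ _), h.nodup_map_snd⟩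

theorem mem_iff : ∀ {S : Set V} {L : List (V × V)}, IsChronListTo G S L T →
    ∀ x, x ∈ T ↔ x ∈ S ∨ ∃ v, (v, x) ∈ L
  | _, [], rfl, _ => by simp
  | _, (v, w) :: _, ⟨_, h⟩, x => by
    rw [h.mem_iff x]
    simp only [Set.mem_insert_iff, List.mem_cons, Prod.mk.injEq]
    grind

theorem length_add_ncard [Finite V] : ∀ {S : Set V} {L : List (V × V)},
    IsChronListTo G S L T → L.length + S.ncard = T.ncard
  | _, [], rfl => by simp
  | _, (_, _) :: _, ⟨hvw, h⟩ => by
    rw [← h.length_add_ncard, Set.ncard_insert_of_notMem hvw.2.1, List.length_cons]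
    omega

theorem subset_fpropSet : ∀ {S : Set V} {L : List (V × V)} {t : ℕ}, IsChronListTo G S L T →
    (∀ q ∈ L, q ∈ F) → S ⊆ fpropSet G B F t → T ⊆ fpropSet G B F (t + L.length)
  | _, [], _, rfl, _, hS => hS
  | _, (_, _) :: _, t, ⟨hvw, h⟩, hLF, hS => by
    have hw := mem_fpropSet_succ_of_isForce (hLF _ List.mem_cons_self) hvw hS
    have := h.subset_fpropSet (fun q hq => hLF q (List.mem_cons_of_mem _ hq))
      (Set.insert_subset hw (hS.trans (fpropSet_mono t.le_succ)))
    rwa [List.length_cons, ← add_assoc, add_right_comm]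

/-- Generalised from `X = univ` for the induction: the vertices outside `X` (the forcers already
reversed) are black and have no white neighbour. -/
theorem reverse {X : Set V} : ∀ {S : Set V} {L : List (V × V)}, IsChronListTo G S L T →
    Xᶜ ⊆ S → (∀ x ∉ X, ∀ u ∉ S, ¬ G.Adj x u) →
    IsChronListTo G (X ∩ termSet {q | q ∈ L}) (L.map Prod.swap).reverse X
  | _, [], _, _, _ => by
    show X ∩ termSet _ = X
    simp [termSet]
  | S, (v, w) :: L, ⟨⟨hv, hw, hvw, hcond⟩, h⟩, hXS, hXadj => by
    have hvX : v ∈ X := of_not_not fun hvX => hXadj v hvX w hw hvw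
    have hwX : w ∈ X \ {v} := ⟨of_not_not fun hwX => hw (hXS hwX), hvw.ne'⟩
    have ih := h.reverse (X := X \ {v})
      (fun x hx => Set.mem_insert_of_mem _ <| by
        by_cases hxX : x ∈ X
        · obtain rfl : x = v := by simpa [hxX] using hx
          exact hv
        · exact hXS hxX)
      (fun x hx u hu hxu => by
        by_cases hxX : x ∈ X
        · obtain rfl : x = v := by simpa [hxX] using hx
          rw [hcond u hxu fun huS => hu (Set.mem_insert_of_mem _ huS)] at hu
          exact hu (Set.mem_insert _ _)
        · exact hXadj x hxX u (fun huS => hu (Set.mem_insert_of_mem _ huS)) hxu)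
    have hlast : IsChronListTo G (X \ {v}) [(w, v)] X :=
      ⟨⟨hwX, fun h => h.2 rfl, hvw.symm, fun u hwu hu => by
        by_contra huv
        exact hXadj u (fun huX => hu ⟨huX, huv⟩) w hw hwu.symm⟩,
        Set.insert_sdiff_self_of_mem hvX⟩
    have hT : X ∩ termSet {q | q ∈ (v, w) :: L} = X \ {v} ∩ termSet {q | q ∈ L} := by
      ext x
      simp only [termSet, Set.mem_inter_iff, Set.mem_sdiff, Set.mem_singleton_iff,
        Set.mem_ofPred_eq, List.mem_cons, Prod.mk.injEq]
      grind
    rw [hT, List.map_cons, List.reverse_cons]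
    exact ih.append hlast

end IsChronListTo

theorem IsChronList.reverse (h : IsChronList G B L) :
    IsChronList G (termSet {q | q ∈ L}) (L.map Prod.swap).reverse := by
  rw [isChronList_iff_isChronListTo]
  simpa using (isChronList_iff_isChronListTo.mp h).reverse (X := Set.univ) (by simp) (by simp)

theorem IsChronList.length_add_ncard [Finite V] (h : IsChronList G B L) :
    L.length + B.ncard = Nat.card V := by
  rw [← Set.ncard_univ]
  exact (isChronList_iff_isChronListTo.mp h).length_add_ncard

namespace IsForceSet

theorem adj (h : IsForceSet G B F) : ∀ q ∈ F, G.Adj q.1 q.2 := by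
  obtain ⟨L, hL, rfl⟩ := h
  exact (isChronList_iff_isChronListTo.mp hL).adj

theorem injOn_snd (h : IsForceSet G B F) : Set.InjOn Prod.snd F := by
  obtain ⟨L, hL, rfl⟩ := h
  exact List.inj_on_of_nodup_map (isChronList_iff_isChronListTo.mp hL).nodup_map_snd

theorem exists_mem_iff (h : IsForceSet G B F) (w : V) : (∃ v, (v, w) ∈ F) ↔ w ∉ B := by
  obtain ⟨L, hL, rfl⟩ := h
  have hL := isChronList_iff_isChronListTo.mp hL
  refine ⟨fun ⟨v, hvw⟩ => hL.snd_notMem (v, w) hvw, fun hw => ?_⟩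
  simpa [hw] using hL.mem_iff w

theorem fpropSet_ptForces (h : IsForceSet G B F) :
    fpropSet G B F (ptForces G B F) = Set.univ := by
  suffices {t | fpropSet G B F t = Set.univ}.Nonempty from Nat.sInf_mem this
  obtain ⟨L, hL, rfl⟩ := h
  have := (isChronList_iff_isChronListTo.mp hL).subset_fpropSet (F := {q | q ∈ L}) (t := 0)
    (fun q hq => hq) (subset_refl B)
  rw [zero_add, Set.univ_subset_iff] at this
  exact ⟨_, this⟩

theorem propSet_ptForces (h : IsForceSet G B F) : propSet G B (ptForces G B F) = Set.univ :=
  Set.univ_subset_iff.mp (h.fpropSet_ptForces ▸ fpropSet_subset_propSet h.adj _)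

theorem isZFSet (h : IsForceSet G B F) : IsZFSet G B := ⟨_, h.propSet_ptForces⟩

theorem ptSet_le_ptForces (h : IsForceSet G B F) : ptSet G B ≤ ptForces G B F :=
  Nat.sInf_le h.propSet_ptForces

theorem rev (h : IsForceSet G B F) : IsForceSet G (termSet F) (revSet F) := by
  obtain ⟨L, hL, rfl⟩ := h
  refine ⟨_, hL.reverse, ?_⟩
  ext ⟨a, b⟩
  simp [revSet]

theorem termSet_revSet (h : IsForceSet G B F) : termSet (revSet F) = B := by
  ext x
  rw [← not_not (a := x ∈ B), ← h.exists_mem_iff]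
  simp [termSet, revSet]

theorem ncard_termSet [Finite V] (h : IsForceSet G B F) : (termSet F).ncard = B.ncard := by
  obtain ⟨L, hL, rfl⟩ := h
  have h₁ := hL.length_add_ncard
  have h₂ := hL.reverse.length_add_ncard
  rw [List.length_reverse, List.length_map] at h₂
  omega

theorem fpropSet_rev_eq_univ (h : IsForceSet G B F) {p : ℕ}
    (hp : fpropSet G B F p = Set.univ) : fpropSet G (termSet F) (revSet F) p = Set.univ := by
  set A := fpropSet G B F
  set R := fpropSet G (termSet F) (revSet F)
  have hinj := h.injOn_snd
  have hnotB : ∀ {u z}, (u, z) ∈ F → z ∉ B := fun huz => (h.exists_mem_iff _).mp ⟨_, huz⟩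
  -- A vertex performing no force of `F` in the first `s` rounds is black after the remaining
  -- `t = p - s` rounds of the reversal.
  have key : ∀ t s, s + t = p → ∀ x, (∀ y, (x, y) ∈ F → y ∉ A s) → x ∈ R t := by
    intro t
    induction t with
    | zero =>
      rintro s rfl x hx y hxy
      exact hx y hxy (hp ▸ Set.mem_univ y)
    | succ t ih =>
      intro s hs x hx
      have ih := ih (s + 1) (by omega)
      by_cases hxR : x ∈ R t
      · exact fpropSet_mono t.le_succ hxR
      obtain ⟨y, hxy, -⟩ : ∃ y, (x, y) ∈ F ∧ y ∈ A (s + 1) := by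
        by_contra! hne
        exact hxR (ih x hne)
      have hyA : y ∉ A s := hx y hxy
      refine Or.inr ⟨y, ⟨(x, y), hxy, rfl⟩, ih y fun z hyz hzA => ?_, hxR, fun u hyu huR => ?_⟩
      · obtain ⟨s', hs', hy, -⟩ := exists_lt_of_mem_fpropSet hinj hyz (hnotB hyz) hzA
        exact hyA (fpropSet_mono (Nat.lt_succ_iff.mp hs') hy)
      · obtain ⟨z, huz, hzA⟩ : ∃ z, (u, z) ∈ F ∧ z ∈ A (s + 1) := by
          by_contra! hne
          exact huR (ih u hne)
        obtain ⟨s', hs', -, -, hcond⟩ := exists_lt_of_mem_fpropSet hinj huz (hnotB huz) hzA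
        obtain rfl : y = z :=
          hcond y hyu.symm fun hy => hyA (fpropSet_mono (Nat.lt_succ_iff.mp hs') hy)
        exact congrArg Prod.fst (hinj huz hxy rfl)
  exact Set.eq_univ_of_forall fun x => key p 0 (zero_add p) x fun y hxy => hnotB hxy

theorem ptForces_rev_le (h : IsForceSet G B F) :
    ptForces G (termSet F) (revSet F) ≤ ptForces G B F :=
  Nat.sInf_le (h.fpropSet_rev_eq_univ h.fpropSet_ptForces)

end IsForceSet

theorem isChronListTo_map_of_isForce {f : V → V} : ∀ {l : List V} {S' : Set V}, l.Nodup →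
    (∀ w ∈ l, IsForce G S (f w) w) → S ⊆ S' → (∀ w ∈ l, w ∉ S') →
    IsChronListTo G S' (l.map fun w => (f w, w)) (S' ∪ {w | w ∈ l})
  | [], _, _, _, _, _ => by simp [IsChronListTo]
  | w :: l, S', hl, hf, hS, hlS => by
    obtain ⟨hwl, hl⟩ := List.nodup_cons.mp hl
    refine ⟨(hf w List.mem_cons_self).mono hS (hlS w List.mem_cons_self), ?_⟩
    have := isChronListTo_map_of_isForce hl (fun x hx => hf x (List.mem_cons_of_mem _ hx))
      (hS.trans (Set.subset_insert w S')) fun x hx hxS => by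
        obtain rfl | hxS := Set.mem_insert_iff.mp hxS
        · exact hwl hx
        · exact hlS x (List.mem_cons_of_mem _ hx) hxS
    convert this using 1
    ext x
    simp only [Set.mem_union, Set.mem_insert_iff, Set.mem_ofPred_eq, List.mem_cons]
    tauto

theorem exists_isChronListTo_forceStep [Finite V] (S : Set V) :
    ∃ L, IsChronListTo G S L (forceStep G S) ∧
      ∀ w ∈ forceStep G S, w ∉ S → ∃ v, (v, w) ∈ L ∧ IsForce G S v w := by
  choose! f hf using fun w (hw : w ∈ forceStep G S \ S) =>
    exists_isForce_of_mem_forceStep hw.1 hw.2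
  obtain ⟨l, hnodup, hl⟩ : ∃ l : List V, l.Nodup ∧ ∀ w, w ∈ l ↔ w ∈ forceStep G S \ S :=
    ⟨(forceStep G S \ S).toFinite.toFinset.toList, Finset.nodup_toList _, by simp⟩
  have hT : S ∪ {w | w ∈ l} = forceStep G S := by
    rw [show {w | w ∈ l} = forceStep G S \ S from Set.ext hl]
    exact Set.union_sdiff_cancel Set.subset_union_left
  refine ⟨l.map fun w => (f w, w), hT ▸ ?_, fun w hw hwS =>
    ⟨f w, List.mem_map_of_mem ((hl w).mpr ⟨hw, hwS⟩), hf w ⟨hw, hwS⟩⟩⟩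
  exact isChronListTo_map_of_isForce hnodup (fun w hw => hf w ((hl w).mp hw)) subset_rfl
    fun w hw => ((hl w).mp hw).2

/-- Perform each round of simultaneous forcing one force at a time. -/
theorem IsZFSet.exists_isForceSet_ptForces_le [Finite V] (h : IsZFSet G B) :
    ∃ F, IsForceSet G B F ∧ ptForces G B F ≤ ptSet G B := by
  have key : ∀ n, ∃ L, IsChronListTo G B L (propSet G B n) ∧
      propSet G B n ⊆ fpropSet G B {q | q ∈ L} n := by
    intro n
    induction n with
    | zero => exact ⟨[], rfl, subset_rfl⟩
    | succ n ih =>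
      obtain ⟨L, hL, hsub⟩ := ih
      obtain ⟨R, hR, hRforce⟩ := exists_isChronListTo_forceStep (G := G) (propSet G B n)
      have hsub' : propSet G B n ⊆ fpropSet G B {q | q ∈ L ++ R} n :=
        hsub.trans (fpropSet_mono_forces (fun q hq => List.mem_append_left R hq) n)
      refine ⟨L ++ R, hL.append hR, fun w hw => ?_⟩
      by_cases hwn : w ∈ propSet G B n
      · exact fpropSet_mono n.le_succ (hsub' hwn)
      · obtain ⟨v, hvR, hvw⟩ := hRforce w hw hwn
        exact mem_fpropSet_succ_of_isForce (List.mem_append_right L hvR) hvw hsub'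
  obtain ⟨L, hL, hsub⟩ := key (ptSet G B)
  have hp : propSet G B (ptSet G B) = Set.univ := Nat.sInf_mem h
  rw [hp, Set.univ_subset_iff] at hsub
  exact ⟨_, ⟨L, isChronList_iff_isChronListTo.mpr (hp ▸ hL), rfl⟩, Nat.sInf_le hsub⟩

theorem ptMin_le_ptSet (h : IsMinZFSet G B) : ptMin G ≤ ptSet G B :=
  Nat.sInf_le ⟨B, h, rfl⟩

theorem IsEffForces.isEffZFSet (h : IsEffForces G B F) : IsEffZFSet G B :=
  ⟨h.1, le_antisymm (h.2.1.ptSet_le_ptForces.trans h.2.2.le) (ptMin_le_ptSet h.1)⟩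

theorem IsEffForces.rev [Finite V] (h : IsEffForces G B F) :
    IsEffForces G (termSet F) (revSet F) := by
  obtain ⟨hB, hF, hpt⟩ := h
  have hT : IsMinZFSet G (termSet F) := ⟨hF.rev.isZFSet, hF.ncard_termSet.trans hB.2⟩
  exact ⟨hT, hF.rev, le_antisymm (hF.ptForces_rev_le.trans hpt.le)
    ((ptMin_le_ptSet hT).trans hF.rev.ptSet_le_ptForces)⟩

theorem IsEffZFSet.exists_isEffForces [Finite V] (h : IsEffZFSet G B) :
    ∃ F, IsEffForces G B F := by
  obtain ⟨F, hF, hle⟩ := h.1.1.exists_isForceSet_ptForces_le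
  exact ⟨F, h.1, hF, le_antisymm (hle.trans h.2.le) (h.2 ▸ hF.ptSet_le_ptForces)⟩

end

/-- The intersection of all efficient zero forcing sets of `G` equals the
intersection of `Term(F)` over all efficient sets of forces `F` of minimum
zero forcing sets of `G`. -/
theorem inter_eff_eq_inter_term {V : Type*} [Finite V] (G : SimpleGraph V) :
    {v : V | ∀ B : Set V, IsEffZFSet G B → v ∈ B} =
      {v : V | ∀ (B : Set V) (F : Set (V × V)), IsEffForces G B F → v ∈ termSet F} := by
  ext v
  constructor
  · intro hv B F hBF
    exact hv _ hBF.rev.isEffZFSet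
  · intro hv B hB
    obtain ⟨F, hBF⟩ := hB.exists_isEffForces
    simpa only [hBF.2.1.termSet_revSet] using hv _ _ hBF.rev
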